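/- arXiv:1803.03031 — 5 statements merged into one kernel-verified Lean document; each statement's English description precedes it below -/
import Mathlib

section
/- In a rooted tree T of depth greater than h (h ≥ 1), define a node u to be a border node if dist(r,u) ≡ 0 (mod h) and the subtree rooted at u has depth at least h−1. Define the domain of a border node v as the set of nodes in the subtree rooted at v that are not in the subtree rooted at any border descendant of v. Then the domains of the border nodes form a partition of the vertex set of T. -/
/-- A finite rooted tree, given by a root, a parent function, and the
distance-to-root function. Every non-root node's parent is one step closer
to the root, and the root is the unique node at distance 0. -/
structure PLSTree (V : Type) [Fintype V] where
  root : V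
  parent : V → V
  dist : V → ℕ
  dist_root : dist root = 0
  parent_root : parent root = root
  dist_parent : ∀ v, v ≠ root → dist (parent v) + 1 = dist v
  eq_root_of_dist : ∀ v, dist v = 0 → v = root

namespace PLSTree

variable {V : Type} [Fintype V]

/-- `T.Anc u v` : `u` is an ancestor of `v` (so `v` is in the subtree rooted at `u`);
reflexive. -/
def Anc (T : PLSTree V) (u v : V) : Prop :=
  Relation.ReflTransGen (fun a b => T.parent a = b) v u

open Classical in
/-- Depth of the subtree rooted at `u`: the largest distance from `u`
to a node of its subtree. -/
noncomputable def depthBelow (T : PLSTree V) (u : V) : ℕ :=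
  Finset.univ.sup fun v => if T.Anc u v then T.dist v - T.dist u else 0

/-- A border node: its distance to the root is `≡ 0 (mod h)` and its subtree
has depth at least `h - 1`. -/
def IsBorder (T : PLSTree V) (h : ℕ) (u : V) : Prop :=
  T.dist u % h = 0 ∧ h - 1 ≤ T.depthBelow u

/-- The domain of a border node `v`: the nodes in the subtree rooted at `v`
that are not in the subtree of any border strict descendant of `v`. -/
def Domain (T : PLSTree V) (h : ℕ) (v w : V) : Prop :=
  T.Anc v w ∧ ∀ b, T.IsBorder h b → T.Anc v b → b ≠ v → ¬ T.Anc b w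

end PLSTree


namespace PLSTree

variable {V : Type} [Fintype V]

lemma anc_dist_le (T : PLSTree V) {u v : V} (huv : T.Anc u v) :
    T.dist u ≤ T.dist v := by
  induction huv with
  | refl => exact le_refl _
  | tail hpre hstep ih =>
    rename_i b c
    by_cases hb : b = T.root
    · subst hb
      rw [T.parent_root] at hstep
      rw [← hstep, T.dist_root]
      omega
    · have := T.dist_parent b hb
      rw [hstep] at this
      omega

lemma anc_dist_lt (T : PLSTree V) {u v : V} (huv : T.Anc u v) (hne : u ≠ v) :
    T.dist u < T.dist v := by
  rcases (Relation.ReflTransGen.cases_head huv) with heq | ⟨c, hc, hcu⟩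
  · exact absurd heq.symm hne
  · by_cases hv : v = T.root
    · exfalso
      have h0 : T.dist u ≤ T.dist v := T.anc_dist_le huv
      rw [hv, T.dist_root] at h0
      exact hne (by rw [hv]; exact T.eq_root_of_dist u (Nat.le_zero.mp h0))
    · have h1 := T.dist_parent v hv
      rw [hc] at h1
      have h2 : T.dist u ≤ T.dist c := T.anc_dist_le hcu
      omega

lemma anc_root (T : PLSTree V) (v : V) : T.Anc T.root v := by
  have H : ∀ n v, T.dist v ≤ n → T.Anc T.root v := by
    intro n
    induction n with
    | zero =>
      intro v hv
      have := T.eq_root_of_dist v (Nat.le_zero.mp hv)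
      subst this
      exact Relation.ReflTransGen.refl
    | succ n ih =>
      intro v hv
      by_cases hv0 : v = T.root
      · subst hv0; exact Relation.ReflTransGen.refl
      · have hp := T.dist_parent v hv0
        exact Relation.ReflTransGen.head rfl (ih _ (by omega))
  exact H (T.dist v) v le_rfl

lemma anc_total (T : PLSTree V) {a b w : V} (ha : T.Anc a w) (hb : T.Anc b w) :
    T.Anc a b ∨ T.Anc b a := by
  induction ha with
  | refl => exact Or.inr hb
  | tail hwc hstep ih =>
    rename_i c a' hca
    rcases ih with h1 | h2
    · -- h1 : T.Anc c b, i.e. ReflTransGen b c ; extend with step c a'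
      exact Or.inl (Relation.ReflTransGen.tail h1 hstep)
    · -- h2 : T.Anc b c, i.e. ReflTransGen c b
      rcases Relation.ReflTransGen.cases_head h2 with heq | ⟨x, hx, hxb⟩
      · subst heq
        exact Or.inl (Relation.ReflTransGen.single hstep)
      · rw [hstep] at hx
        subst hx
        exact Or.inr hxb

end PLSTree

/-- In a rooted tree of depth greater than `h` (`h ≥ 1`),
the domains of the border nodes form a partition of the vertex set:
every node belongs to the domain of exactly one border node. -/
theorem stmt0 {V : Type} [Fintype V] (T : PLSTree V) (h : ℕ)
    (hh : 1 ≤ h) (hdepth : h < T.depthBelow T.root) :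
    ∀ w : V, ∃! v : V, T.IsBorder h v ∧ T.Domain h v w := by
  classical
  intro w
  have hrootb : T.IsBorder h T.root :=
    ⟨by simp [T.dist_root], le_trans (Nat.sub_le h 1) (le_of_lt hdepth)⟩
  let S : Finset V := Finset.univ.filter (fun v => T.IsBorder h v ∧ T.Anc v w)
  have hSne : S.Nonempty := ⟨T.root, by simp [S, hrootb, T.anc_root w]⟩
  obtain ⟨v, hvS, hvmax⟩ := S.exists_max_image T.dist hSne
  simp only [S, Finset.mem_filter, Finset.mem_univ, true_and] at hvS
  have hdom : ∀ b, T.IsBorder h b → T.Anc v b → b ≠ v → ¬ T.Anc b w := by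
    intro b hbB hvb hbv hbw
    have hbS : b ∈ S := by simp [S, hbB, hbw]
    have hle := hvmax b hbS
    have hlt := T.anc_dist_lt hvb (Ne.symm hbv)
    omega
  refine ⟨v, ⟨hvS.1, hvS.2, hdom⟩, ?_⟩
  rintro y ⟨hyB, hyw, hydom⟩
  by_contra hne
  rcases T.anc_total hyw hvS.2 with h1 | h2
  · exact hydom v hvS.1 h1 (Ne.symm hne) hvS.2
  · exact hdom y hyB h2 hne hyw
end

section
/- In a rooted tree T with the border-node decomposition (border nodes are nodes u with dist(r,u) ≡ 0 mod h whose subtree has depth at least h−1, h ≥ 1), the domain of every border node v induces a subtree rooted at v whose depth is at least h−1 and at most 2h−1. -/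
namespace PLSTreeAux

variable {V : Type} [Fintype V] (T : PLSTree V)

lemma dist_parent_le (b : V) : T.dist (T.parent b) ≤ T.dist b := by
  by_cases hb : b = T.root
  · subst hb; rw [T.parent_root]
  · have := T.dist_parent b hb; omega

lemma anc_dist_le {u v : V} (h : T.Anc u v) : T.dist u ≤ T.dist v := by
  induction h with
  | refl => exact le_rfl
  | tail hbc hr ih =>
      exact le_trans (by rw [← hr]; exact dist_parent_le T _) ih

lemma anc_eq_of_dist_le {u v : V} (h : T.Anc u v) (hd : T.dist v ≤ T.dist u) : u = v := by
  induction h with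
  | refl => rfl
  | @tail b c hvb hr ih =>
      have hbv : T.dist b ≤ T.dist v := anc_dist_le T hvb
      have hcb : T.dist c ≤ T.dist b := by rw [← hr]; exact dist_parent_le T _
      have hbveq : b = v := ih (by omega)
      subst hbveq
      by_cases hb : b = T.root
      · rw [← hr, hb, T.parent_root]
      · have := T.dist_parent b hb; rw [← hr] at hd; omega

lemma exists_anc_at {u v : V} (hanc : T.Anc v u) {d : ℕ}
    (hd₁ : T.dist v ≤ d) (hd₂ : d ≤ T.dist u) :
    ∃ w, T.Anc v w ∧ T.Anc w u ∧ T.dist w = d := by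
  unfold PLSTree.Anc at hanc
  induction hanc using Relation.ReflTransGen.head_induction_on with
  | refl => exact ⟨v, Relation.ReflTransGen.refl, Relation.ReflTransGen.refl, le_antisymm hd₁ hd₂⟩
  | @head u c hstep hchain ih =>
      by_cases hdu : d = T.dist u
      · exact ⟨u, Relation.ReflTransGen.head hstep hchain, Relation.ReflTransGen.refl, hdu.symm⟩
      · have hur : u ≠ T.root := by
          intro hr
          have h0 : T.dist u = 0 := by rw [hr]; exact T.dist_root
          omega
        have hdc : T.dist c = T.dist u - 1 := by
          have := T.dist_parent u hur; rw [hstep] at this; omega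
        obtain ⟨w, hvw, hwc, hwd⟩ := ih (by omega)
        exact ⟨w, hvw, Relation.ReflTransGen.head hstep hwc, hwd⟩

lemma le_depthBelow {u w : V} (hanc : T.Anc u w) : T.dist w - T.dist u ≤ T.depthBelow u := by
  unfold PLSTree.depthBelow
  refine le_trans ?_ (Finset.le_sup (Finset.mem_univ w))
  rw [if_pos hanc]

end PLSTreeAux

/-- In a rooted tree with the border-node decomposition
(parameter `h ≥ 1`, tree deep enough that the root is a border node),
the domain of every border node `v` induces a subtree rooted at `v`
(it contains `v` and is closed under taking parents of its non-`v` members)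
whose depth is at least `h - 1` and at most `2h - 1`. -/
theorem stmt1 {V : Type} [Fintype V] (T : PLSTree V) (h : ℕ)
    (hh : 1 ≤ h) (hdepth : h < T.depthBelow T.root)
    (v : V) (hv : T.IsBorder h v) :
    T.Domain h v v ∧
    (∀ w, T.Domain h v w → w ≠ v → T.Domain h v (T.parent w)) ∧
    (∃ w, T.Domain h v w ∧ T.dist w = T.dist v + (h - 1)) ∧
    (∀ w, T.Domain h v w → T.dist w ≤ T.dist v + (2 * h - 1)) := by
  obtain ⟨hvmod, hvdepth⟩ := hv
  have hdomv : T.Domain h v v := by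
    refine ⟨Relation.ReflTransGen.refl, ?_⟩
    intro b hb hvb hbv hbanc
    exact hbv (PLSTreeAux.anc_eq_of_dist_le T hvb (PLSTreeAux.anc_dist_le T hbanc)).symm
  refine ⟨hdomv, ?_, ?_, ?_⟩
  · -- parent-closure
    intro w hw hwv
    obtain ⟨hvw, hnb⟩ := hw
    have hvw' : Relation.ReflTransGen (fun a b => T.parent a = b) w v := hvw
    rcases Relation.ReflTransGen.cases_head hvw' with heq | ⟨c, hc, hchain⟩
    · exact absurd heq hwv
    · subst hc
      refine ⟨hchain, ?_⟩
      intro b hb hvb hbv hbw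
      exact hnb b hb hvb hbv (Relation.ReflTransGen.head rfl hbw)
  · -- existence of deep member
    by_cases h1 : h = 1
    · exact ⟨v, hdomv, by simp [h1]⟩
    · have hpos : (0:ℕ) < h - 1 := by omega
      have hex : ∃ u, T.Anc v u ∧ h - 1 ≤ T.dist u - T.dist v := by
        have hs := hvdepth
        unfold PLSTree.depthBelow at hs
        rw [Finset.le_sup_iff hpos] at hs
        obtain ⟨u, _, hu⟩ := hs
        by_cases ha : T.Anc v u
        · exact ⟨u, ha, by rwa [if_pos ha] at hu⟩
        · rw [if_neg ha] at hu; omega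
      obtain ⟨u, hvu, hu⟩ := hex
      have hvu' : T.dist v ≤ T.dist u := PLSTreeAux.anc_dist_le T hvu
      obtain ⟨w, hvw, hwu, hwd⟩ := PLSTreeAux.exists_anc_at T hvu
        (d := T.dist v + (h - 1)) (by omega) (by omega)
      refine ⟨w, ⟨hvw, ?_⟩, hwd⟩
      intro b hb hvb hbv hbw
      have h2 : T.dist v ≤ T.dist b := PLSTreeAux.anc_dist_le T hvb
      have h3 : T.dist b ≤ T.dist w := PLSTreeAux.anc_dist_le T hbw
      have h4 : T.dist v ≠ T.dist b := by
        intro he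
        exact hbv (PLSTreeAux.anc_eq_of_dist_le T hvb (le_of_eq he.symm)).symm
      obtain ⟨k, hk⟩ := Nat.dvd_of_mod_eq_zero hb.1
      obtain ⟨m, hm⟩ := Nat.dvd_of_mod_eq_zero hvmod
      have hmk : m + 1 ≤ k := by
        by_contra hmk
        push_neg at hmk
        have : h * k ≤ h * m := Nat.mul_le_mul_left h (by omega)
        omega
      have hstep : T.dist v + h ≤ T.dist b := by
        have : h * (m + 1) ≤ h * k := Nat.mul_le_mul_left h hmk
        have hm1 : h * (m + 1) = h * m + h := by ring
        omega
      omega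
  · -- upper bound
    intro w hw
    obtain ⟨hvw, hnb⟩ := hw
    by_contra hgt
    push_neg at hgt
    obtain ⟨b, hvb, hbw, hbd⟩ := PLSTreeAux.exists_anc_at T hvw
      (d := T.dist v + h) (by omega) (by omega)
    have hbborder : T.IsBorder h b := by
      constructor
      · rw [hbd, Nat.add_mod_right]; exact hvmod
      · have := PLSTreeAux.le_depthBelow T hbw
        omega
    have hbv : b ≠ v := by
      intro he; rw [he] at hbd; omega
    exact hnb b hbborder hvb hbv hbw
end

section
/- Let G be a connected graph on n nodes, t ≥ 1, and c a sufficiently large constant with t ≥ c·log n being not required but n large. Suppose each node v independently keeps, for each other node u, the value dist(v,u) with probability c·(log n)/t. Then with positive probability, for every ordered pair (v,u) of distinct nodes at distance greater than t, at least one of the first t nodes on some fixed shortest path from v to u keeps its distance to u, and simultaneously every node keeps at most 2c·n·(log n)/t distance values. -/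
/-!
Since the measure is a finite product of Bernoulli measures, it suffices to exhibit one good
configuration all of whose bits have positive probability. If `t ≤ 6 log n`, keep everything.
Otherwise let every node keep a uniformly random set of exactly `k = ⌈3 n log n / t⌉` targets:
a pair `(v, u)` is missed by all `t` nodes of `P v u` with probability `(1 - k/n)^t ≤ n⁻³`, so a
union bound over the at most `n²` pairs yields a configuration hitting every far pair, and its
rows have size `k ≤ 6 n log n / t`.
-/

open MeasureTheory Finset
open scoped Classical

theorem MeasureTheory.Measure.pi_toMeasure_pos_of_mem {ι α : Type*} [Fintype ι]
    [MeasurableSpace α] [MeasurableSingletonClass α] (μ : ι → PMF α) {S : Set (ι → α)}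
    {f : ι → α} (hf : f ∈ S) (hμ : ∀ i, f i ∈ (μ i).support) :
    0 < Measure.pi (fun i => (μ i).toMeasure) S := by
  refine (measure_mono (Set.singleton_subset_iff.2 hf)).trans_lt' ?_
  rw [← Set.univ_pi_singleton, Measure.pi_pi]
  refine CanonicallyOrderedAdd.prod_pos.2 fun i _ => ?_
  rw [PMF.toMeasure_apply_singleton _ _ (measurableSet_singleton _)]
  exact pos_iff_ne_zero.2 (hμ i)

theorem Nat.sub_one_choose_mul_self (m k : ℕ) : (m - 1).choose k * m = (m - k) * m.choose k := by
  cases m with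
  | zero => simp
  | succ n => rw [Nat.add_sub_cancel, Nat.choose_mul_succ_eq, mul_comm]

section Rows

variable {V U : Type*} [Fintype V] [Fintype U]

/-- Division-free form of `Pr[u ∉ g w for all w ∈ Q] ≤ (1 - k/m)^#Q` for independent uniform
`k`-subsets `g w` of `U`, where `m = card U`. -/
theorem card_filter_avoid_mul_pow_le (k : ℕ) (Q : Finset V) (u : U) :
    #((Fintype.piFinset fun _ : V => (univ : Finset U).powersetCard k).filter
        fun g => ∀ w ∈ Q, u ∉ g w) * Fintype.card U ^ #Q
      ≤ (Fintype.card U - k) ^ #Q * (Fintype.card U).choose k ^ Fintype.card V := by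
  set m := Fintype.card U
  have hsub : (Fintype.piFinset fun _ : V => (univ : Finset U).powersetCard k).filter
        (fun g => ∀ w ∈ Q, u ∉ g w) ⊆ Fintype.piFinset fun w =>
          if w ∈ Q then (univ.erase u).powersetCard k else univ.powersetCard k := by
    intro g hg
    simp only [mem_filter, Fintype.mem_piFinset, mem_powersetCard] at hg ⊢
    intro w
    split_ifs with hw
    · exact mem_powersetCard.2 ⟨subset_erase.2 ⟨subset_univ _, hg.2 w hw⟩, (hg.1 w).2⟩
    · exact mem_powersetCard.2 ⟨subset_univ _, (hg.1 w).2⟩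
  have hfactor (w : V) :
      #(if w ∈ Q then (univ.erase u).powersetCard k else univ.powersetCard k) *
        (if w ∈ Q then m else 1) = (if w ∈ Q then m - k else 1) * m.choose k := by
    split_ifs
    · rw [card_powersetCard, card_erase_of_mem (mem_univ u), card_univ,
        Nat.sub_one_choose_mul_self]
    · simp [m]
  calc _ ≤ (∏ w, #(if w ∈ Q then (univ.erase u).powersetCard k else univ.powersetCard k)) *
          ∏ w, (if w ∈ Q then m else 1) := by
        rw [← Fintype.card_piFinset, Fintype.prod_ite_mem, prod_const]
        exact Nat.mul_le_mul_right _ (card_le_card hsub)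
    _ = (m - k) ^ #Q * m.choose k ^ Fintype.card V := by
        rw [← prod_mul_distrib, Fintype.prod_congr _ _ hfactor, prod_mul_distrib,
          Fintype.prod_ite_mem, prod_const, prod_const, card_univ]

theorem exists_rows_card_eq_forall_hit {ι : Type*} (F : Finset ι) (Q : ι → Finset V)
    (u : ι → U) {k t : ℕ} (hk : k ≤ Fintype.card U) (hQ : ∀ i ∈ F, #(Q i) = t)
    (hF : #F * (Fintype.card U - k) ^ t < Fintype.card U ^ t) :
    ∃ g : V → Finset U, (∀ w, #(g w) = k) ∧ ∀ i ∈ F, ∃ w ∈ Q i, u i ∈ g w := by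
  set m := Fintype.card U
  set Ω := Fintype.piFinset fun _ : V => (univ : Finset U).powersetCard k
  set avoid := fun i => Ω.filter fun g => ∀ w ∈ Q i, u i ∉ g w
  have hΩ : #Ω = m.choose k ^ Fintype.card V := by
    simp [Ω, Fintype.card_piFinset, card_powersetCard, m]
  suffices ∃ g ∈ Ω, ∀ i ∈ F, g ∉ avoid i by
    obtain ⟨g, hgΩ, hg⟩ := this
    refine ⟨g, fun w => (mem_powersetCard.1 (Fintype.mem_piFinset.1 hgΩ w)).2, fun i hi => ?_⟩
    simpa [avoid, hgΩ] using hg i hi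
  by_contra! hcover
  have hΩpos : 0 < #Ω := hΩ ▸ pow_pos (Nat.choose_pos hk) _
  have : #Ω * m ^ t < #Ω * m ^ t :=
    calc #Ω * m ^ t ≤ (∑ i ∈ F, #(avoid i)) * m ^ t := by
          refine Nat.mul_le_mul_right _ ((card_le_card fun g hg => ?_).trans card_biUnion_le)
          obtain ⟨i, hi, hgi⟩ := hcover g hg
          exact mem_biUnion.2 ⟨i, hi, hgi⟩
      _ ≤ ∑ _i ∈ F, (m - k) ^ t * #Ω := by
          rw [sum_mul]
          refine sum_le_sum fun i hi => ?_
          simpa [hQ i hi, hΩ] using card_filter_avoid_mul_pow_le k (Q i) (u i)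
      _ < #Ω * m ^ t := by
          rw [sum_const, smul_eq_mul, ← mul_assoc, mul_comm #Ω]
          exact Nat.mul_lt_mul_of_pos_right hF hΩpos
  exact lt_irrefl _ this

end Rows

theorem sq_mul_sub_pow_lt_pow {n k t : ℕ} (hn : 2 ≤ n) (hk : k ≤ n)
    (hkt : 3 * n * Real.log n ≤ k * t) : n ^ 2 * (n - k) ^ t < n ^ t := by
  have hn0 : (0 : ℝ) < n := by positivity
  have hdecay : ((n : ℝ) - k) ^ t ≤ n ^ t / n ^ 3 :=
    calc ((n : ℝ) - k) ^ t ≤ (n * Real.exp (-(k / n))) ^ t := by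
          refine pow_le_pow_left₀ (by simp [hk]) ?_ t
          have := Real.one_sub_le_exp_neg ((k : ℝ) / n)
          rw [sub_div' hn0.ne', div_le_iff₀ hn0] at this
          linarith
      _ = n ^ t / Real.exp (k * t / n) := by
          rw [mul_pow, ← Real.exp_nat_mul, mul_neg, Real.exp_neg, div_eq_mul_inv]; ring_nf
      _ ≤ n ^ t / Real.exp (3 * Real.log n) := by
          gcongr
          rw [le_div_iff₀ hn0]; linarith
      _ = n ^ t / n ^ 3 := by
          rw [← Real.exp_log (pow_pos hn0 3), Real.log_pow]; norm_num
  have hreal : (n : ℝ) ^ 2 * ((n : ℝ) - k) ^ t < (n : ℝ) ^ t :=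
    calc (n : ℝ) ^ 2 * ((n : ℝ) - k) ^ t ≤ (n : ℝ) ^ 2 * ((n : ℝ) ^ t / (n : ℝ) ^ 3) := by gcongr
      _ = (n : ℝ) ^ t / n := by field_simp
      _ < (n : ℝ) ^ t := div_lt_self (by positivity) (by exact_mod_cast hn)
  exact_mod_cast (show ((n ^ 2 * (n - k) ^ t : ℕ) : ℝ) < (n ^ t : ℕ) by
    push_cast [Nat.cast_sub hk]; exact hreal)

theorem SimpleGraph.Connected.dist_lt_card {V : Type*} [Fintype V] {G : SimpleGraph V}
    (hG : G.Connected) (u v : V) : G.dist u v < Fintype.card V := by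
  obtain ⟨p, hp, hlen⟩ := hG.exists_path_of_dist u v
  exact hlen ▸ hp.length_lt

theorem exists_sparse_hitting_config {V : Type*} [Fintype V] {t : ℕ}
    (far : V → V → Prop) (P : V → V → Finset V) (ht : 1 ≤ t) (htn : t < Fintype.card V)
    (hP : ∀ v u, far v u → #(P v u) = t) (hlog : 6 * Real.log (Fintype.card V) < t) :
    ∃ f : V × V → Bool, (∀ v u, far v u → ∃ w ∈ P v u, f (w, u) = true) ∧
      ∀ v, (#(univ.filter fun u => f (v, u) = true) : ℝ) ≤
        2 * 3 * Fintype.card V * Real.log (Fintype.card V) / t := by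
  set n := Fintype.card V
  have ht0 : (0 : ℝ) < t := by exact_mod_cast ht
  have hn : 2 ≤ n := by omega
  have hlog2 : Real.log 2 ≤ Real.log n := Real.log_le_log two_pos (by exact_mod_cast hn)
  set x := 3 * n * Real.log n / t
  have hx : 2⁻¹ < x := by
    have : (t : ℝ) < n := by exact_mod_cast htn
    rw [lt_div_iff₀ ht0]
    nlinarith [Real.log_two_gt_d9]
  have hxn : x ≤ n / 2 := by
    rw [div_le_div_iff₀ ht0 two_pos]
    nlinarith
  set k := ⌈x⌉₊
  have hkn : k ≤ n := by
    have : (k : ℝ) < x + 1 := Nat.ceil_lt_add_one (by positivity)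
    have : (2 : ℝ) ≤ n := by exact_mod_cast hn
    exact_mod_cast (by linarith : (k : ℝ) ≤ n)
  have hcount : #(univ.filter fun q : V × V => far q.1 q.2) * (n - k) ^ t < n ^ t := by
    refine lt_of_le_of_lt (Nat.mul_le_mul_right _ ?_) (sq_mul_sub_pow_lt_pow hn hkn ?_)
    · simpa [n, sq] using card_filter_le (univ : Finset (V × V)) _
    · calc 3 * n * Real.log n = x * t := (div_mul_cancel₀ _ ht0.ne').symm
        _ ≤ k * t := by gcongr; exact Nat.le_ceil x
  obtain ⟨g, hgk, hg⟩ := exists_rows_card_eq_forall_hit _ (fun q => P q.1 q.2) Prod.snd hkn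
    (fun q hq => hP q.1 q.2 (mem_filter.1 hq).2) hcount
  refine ⟨fun q => decide (q.2 ∈ g q.1), fun v u hvu => ?_, fun v => ?_⟩
  · simpa using hg (v, u) (by simpa using hvu)
  · have hrow : (univ.filter fun u => decide (u ∈ g v) = true) = g v := by ext; simp
    calc (#(univ.filter fun u => decide (u ∈ g v) = true) : ℝ) = k := by rw [hrow, hgk]
      _ ≤ 2 * x := (Nat.ceil_lt_two_mul hx).le
      _ = 2 * 3 * n * Real.log n / t := by ring

/-- Let `G` be a connected graph on `n` nodes, `t ≥ 1`, and `c`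
a sufficiently large constant. Suppose each node `v` independently keeps, for each
other node `u`, the value `dist(v,u)` with probability `c·(log n)/t`. Then with
positive probability, for every ordered pair `(v,u)` of distinct nodes at distance
greater than `t`, at least one of the first `t` nodes on the fixed shortest path
`P v u` from `v` to `u` keeps its distance to `u`, while simultaneously every node
keeps at most `2c·n·(log n)/t` distance values. -/
theorem stmt6 :
    ∃ c : ℝ, 0 < c ∧
      ∀ (V : Type) [Fintype V] (G : SimpleGraph V) (t : ℕ) (P : V → V → Finset V),
        G.Connected → 1 ≤ t →
        (∀ v u : V, t < G.dist v u →
          (P v u).card = t ∧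
            ∀ w ∈ P v u, G.dist v w + G.dist w u = G.dist v u ∧ G.dist v w ≤ t) →
        ∀ hp : ENNReal.ofReal (c * Real.log (Fintype.card V) / t) ≤ 1,
          0 < Measure.pi
              (fun _ : V × V =>
                (PMF.bernoulli (Real.toNNReal (c * Real.log (Fintype.card V) / t))
                  (ENNReal.coe_le_one_iff.mp hp)).toMeasure)
              {f : V × V → Bool |
                (∀ v u : V, v ≠ u → t < G.dist v u → ∃ w ∈ P v u, f (w, u) = true) ∧
                (∀ v : V, ((Finset.univ.filter fun u : V => f (v, u) = true).card : ℝ)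
                    ≤ 2 * c * (Fintype.card V) * Real.log (Fintype.card V) / t)} := by
  refine ⟨3, by norm_num, fun V _ G t P hG ht hP hp => ?_⟩
  set n := Fintype.card V
  have ht0 : (0 : ℝ) < t := by exact_mod_cast ht
  have hp0 (hlog : 0 < Real.log n) : Real.toNNReal (3 * Real.log n / t) ≠ 0 :=
    (Real.toNNReal_pos.2 (by positivity)).ne'
  have hp1 (hlog : 6 * Real.log n < t) : Real.toNNReal (3 * Real.log n / t) ≠ 1 :=
    (Real.toNNReal_lt_one.2 (by rw [div_lt_one ht0]; linarith)).ne
  rcases le_or_gt (t : ℝ) (6 * Real.log n) with hsmall | hlarge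
  · refine Measure.pi_toMeasure_pos_of_mem _ (f := fun _ => true) ⟨?_, fun v => ?_⟩
      fun _ => (PMF.mem_support_bernoulli_iff _ true).2 (hp0 (by linarith))
    · intro v u _ hvu
      obtain ⟨w, hw⟩ := card_pos.1 ((hP v u hvu).1 ▸ ht)
      exact ⟨w, hw, rfl⟩
    · rw [filter_true_of_mem fun _ _ => rfl, card_univ, le_div_iff₀ ht0]
      nlinarith
  by_cases hfar : ∃ v u, t < G.dist v u
  · obtain ⟨v, u, hvu⟩ := hfar
    have htn : t < n := hvu.trans (hG.dist_lt_card v u)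
    have hlog : 0 < Real.log n := Real.log_pos (by exact_mod_cast (by omega : 1 < n))
    obtain ⟨f, hhit, hrow⟩ := exists_sparse_hitting_config (fun v u => t < G.dist v u) P ht htn
      (fun v u hvu => (hP v u hvu).1) hlarge
    refine Measure.pi_toMeasure_pos_of_mem _ (f := f) ⟨fun v u _ => hhit v u, hrow⟩ fun i =>
      (PMF.mem_support_bernoulli_iff _ _).2 ?_
    cases f i
    exacts [hp1 hlarge, hp0 hlog]
  · refine Measure.pi_toMeasure_pos_of_mem _ (f := fun _ => false) ⟨?_, fun v => ?_⟩
      fun _ => (PMF.mem_support_bernoulli_iff _ false).2 (hp1 hlarge)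
    · exact fun v u _ hvu => absurd ⟨v, u, hvu⟩ hfar
    · simp only [Bool.false_eq_true, filter_false_of_mem fun _ _ => not_false, card_empty,
        Nat.cast_zero]
      positivity
end

section
/- In the lower-bound graph construction, every node in L ∪ T ∪ F or lying on a P-path among the left-side nodes is at distance at most 2P from ℓ_{k+1}; consequently every two nodes on the left side are at distance at most 4P from each other, and every left-side node is at distance at most 4P + 2t + 1 from every right-side node. -/
/-! The lower-bound graph construction used to prove lower bounds for
`t`-round proof-labeling schemes for the diameter predicate.

The graph has base nodes `ℓ_0, …, ℓ_{k+1}`, `ℓ'_0, …, ℓ'_{k-1}`, `t_h`, `f_h`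
(`h < log k`) on the left, and symmetric nodes on the right. Base nodes are
connected by paths (whose interior nodes are fresh): `P`-paths connect
`ℓ_i–ℓ'_i`, `ℓ_i–ℓ_k`, `ℓ_k–ℓ_{k+1}`, `ℓ_{k+1}–t_h`, `ℓ_{k+1}–f_h`, and `ℓ_i`
to the nodes encoding its binary representation (`t_h` if bit `h` of `i` is 1,
`f_h` otherwise); symmetrically on the right. `(2t+1)`-paths connect `t_h–f'_h`,
`f_h–t'_h` and `ℓ_{k+1}–r_{k+1}`. Finally, the input edge `(ℓ_i, ℓ_{k+1})` is
present iff `S_A[i] = 0`, and `(r_i, r_{k+1})` iff `S_B[i] = 0`. -/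

/-- The base (named) nodes of the construction. `L i` is `ℓ_i` for `i < k`,
`Lk` is `ℓ_k`, `Lk1` is `ℓ_{k+1}`, `L' i` is `ℓ'_i`, `Tl h` is `t_h`,
`Fl h` is `f_h`; similarly on the right. -/
inductive LBBase (k lk : ℕ) : Type
  | L (i : Fin k) | L' (i : Fin k) | Lk | Lk1 | Tl (h : Fin lk) | Fl (h : Fin lk)
  | R (i : Fin k) | R' (i : Fin k) | Rk | Rk1 | Tr (h : Fin lk) | Fr (h : Fin lk)

/-- Names for the connecting paths (and the two families of input edges). -/
inductive LBEdge (k lk : ℕ) : Type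
  | ll' (i : Fin k) | llk (i : Fin k) | lklk1
  | lk1t (h : Fin lk) | lk1f (h : Fin lk) | lenc (i : Fin k) (h : Fin lk)
  | rr' (i : Fin k) | rrk (i : Fin k) | rkrk1
  | rk1t (h : Fin lk) | rk1f (h : Fin lk) | renc (i : Fin k) (h : Fin lk)
  | cr1 (h : Fin lk) | cr2 (h : Fin lk) | crC
  | inA (i : Fin k) | inB (i : Fin k)

namespace LB

variable {k lk : ℕ}

/-- The two endpoints of each connecting path. -/
def ends : LBEdge k lk → LBBase k lk × LBBase k lk
  | .ll' i => (.L i, .L' i)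
  | .llk i => (.L i, .Lk)
  | .lklk1 => (.Lk, .Lk1)
  | .lk1t h => (.Lk1, .Tl h)
  | .lk1f h => (.Lk1, .Fl h)
  | .lenc i h => (.L i, if Nat.testBit i.val h.val then .Tl h else .Fl h)
  | .rr' i => (.R i, .R' i)
  | .rrk i => (.R i, .Rk)
  | .rkrk1 => (.Rk, .Rk1)
  | .rk1t h => (.Rk1, .Tr h)
  | .rk1f h => (.Rk1, .Fr h)
  | .renc i h => (.R i, if Nat.testBit i.val h.val then .Tr h else .Fr h)
  | .cr1 h => (.Tl h, .Fr h)
  | .cr2 h => (.Fl h, .Tr h)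
  | .crC => (.Lk1, .Rk1)
  | .inA i => (.L i, .Lk1)
  | .inB i => (.R i, .Rk1)

/-- The number of edges of each connecting path: `2t+1` for the three
cross families, `1` for the input edges, and `P` for all others. -/
def elen (P t : ℕ) : LBEdge k lk → ℕ
  | .cr1 _ => 2 * t + 1
  | .cr2 _ => 2 * t + 1
  | .crC => 2 * t + 1
  | .inA _ => 1
  | .inB _ => 1
  | _ => P

/-- Which connecting paths are present: all of them, except that the input edge
`(ℓ_i, ℓ_{k+1})` is present iff `S_A[i] = 0`, and `(r_i, r_{k+1})` iff `S_B[i] = 0`. -/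
def active (SA SB : Fin k → Bool) : LBEdge k lk → Prop
  | .inA i => SA i = false
  | .inB i => SB i = false
  | _ => True

/-- The vertices of the lower-bound graph: base nodes, plus the interior
nodes of the connecting paths (a path with `m` edges has `m - 1` interior
nodes, numbered consecutively from its first endpoint). -/
def Vtx (k lk P t : ℕ) : Type :=
  LBBase k lk ⊕ (Σ e : LBEdge k lk, Fin (elen P t e - 1))

/-- One direction of the adjacency relation of the lower-bound graph. -/
def Rel (k lk P t : ℕ) (SA SB : Fin k → Bool) : Vtx k lk P t → Vtx k lk P t → Prop :=
  fun x y =>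
    (∃ e : LBEdge k lk, active SA SB e ∧ elen P t e = 1 ∧
        x = Sum.inl (ends e).1 ∧ y = Sum.inl (ends e).2) ∨
    (∃ (e : LBEdge k lk) (j : Fin (elen P t e - 1)), active SA SB e ∧
        x = Sum.inl (ends e).1 ∧ y = Sum.inr ⟨e, j⟩ ∧ j.val = 0) ∨
    (∃ (e : LBEdge k lk) (j : Fin (elen P t e - 1)), active SA SB e ∧
        x = Sum.inr ⟨e, j⟩ ∧ y = Sum.inl (ends e).2 ∧ j.val + 2 = elen P t e) ∨
    (∃ (e : LBEdge k lk) (j j' : Fin (elen P t e - 1)), active SA SB e ∧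
        x = Sum.inr ⟨e, j⟩ ∧ y = Sum.inr ⟨e, j'⟩ ∧ j'.val = j.val + 1)

/-- The lower-bound graph. -/
def graph (k lk P t : ℕ) (SA SB : Fin k → Bool) : SimpleGraph (Vtx k lk P t) :=
  SimpleGraph.fromRel (Rel k lk P t SA SB)

end LB

namespace LB

/-- The left-side core nodes: `L ∪ T ∪ F` (together with `ℓ_k`, `ℓ_{k+1}`) and
the interior nodes of the `P`-paths connecting these left-side nodes. -/
def leftCore {k lk P t : ℕ} : Vtx k lk P t → Prop
  | Sum.inl (LBBase.L _) => True
  | Sum.inl LBBase.Lk => True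
  | Sum.inl LBBase.Lk1 => True
  | Sum.inl (LBBase.Tl _) => True
  | Sum.inl (LBBase.Fl _) => True
  | Sum.inr ⟨LBEdge.llk _, _⟩ => True
  | Sum.inr ⟨LBEdge.lklk1, _⟩ => True
  | Sum.inr ⟨LBEdge.lk1t _, _⟩ => True
  | Sum.inr ⟨LBEdge.lk1f _, _⟩ => True
  | Sum.inr ⟨LBEdge.lenc _ _, _⟩ => True
  | _ => False

/-- The right-side core nodes, symmetrically. -/
def rightCore {k lk P t : ℕ} : Vtx k lk P t → Prop
  | Sum.inl (LBBase.R _) => True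
  | Sum.inl LBBase.Rk => True
  | Sum.inl LBBase.Rk1 => True
  | Sum.inl (LBBase.Tr _) => True
  | Sum.inl (LBBase.Fr _) => True
  | Sum.inr ⟨LBEdge.rrk _, _⟩ => True
  | Sum.inr ⟨LBEdge.rkrk1, _⟩ => True
  | Sum.inr ⟨LBEdge.rk1t _, _⟩ => True
  | Sum.inr ⟨LBEdge.rk1f _, _⟩ => True
  | Sum.inr ⟨LBEdge.renc _ _, _⟩ => True
  | _ => False

end LB

/-! Every left core node lies on a `P`-path ending at `ℓ_k`, `t_h`, `f_h` or `ℓ_{k+1}`, and each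
of `ℓ_k`, `t_h`, `f_h` is joined to `ℓ_{k+1}` by a `P`-path: this gives the bound `2P`. The other
bounds follow by the triangle inequality through `ℓ_{k+1}` and, for the right side, through the
`(2t+1)`-path to `r_{k+1}`. We bound `edist`, whose triangle inequality needs no reachability,
and read off `dist = edist.toNat`. -/

lemma SimpleGraph.edist_le_add_of_le {V : Type*} {G : SimpleGraph V} {u v w : V} {a b : ℕ∞}
    (huv : G.edist u v ≤ a) (hvw : G.edist v w ≤ b) : G.edist u w ≤ a + b :=
  G.edist_triangle.trans (add_le_add huv hvw)

lemma SimpleGraph.Adj.edist_le_one {V : Type*} {G : SimpleGraph V} {u v : V} (h : G.Adj u v) :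
    G.edist u v ≤ 1 :=
  (edist_eq_one_iff_adj.mpr h).le

namespace LB

open SimpleGraph

variable {k lk P t : ℕ} {SA SB : Fin k → Bool} {e : LBEdge k lk}

local notation "𝔾" => graph k lk P t SA SB

lemma adj_of_rel {x y : Vtx k lk P t} (hne : x ≠ y) (h : Rel k lk P t SA SB x y) : Adj 𝔾 x y :=
  (fromRel_adj _ _ _).mpr ⟨hne, .inl h⟩

lemma adj_fst_interior (j : Fin (elen P t e - 1)) (he : active SA SB e) (hj : j.val = 0) :
    Adj 𝔾 (Sum.inl (ends e).1) (Sum.inr ⟨e, j⟩) :=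
  adj_of_rel Sum.inl_ne_inr (.inr (.inl ⟨e, j, he, rfl, rfl, hj⟩))

lemma adj_interior_succ (j j' : Fin (elen P t e - 1)) (he : active SA SB e)
    (hj : j'.val = j.val + 1) :
    Adj 𝔾 (Sum.inr ⟨e, j⟩) (Sum.inr ⟨e, j'⟩) := by
  refine adj_of_rel (fun h => ?_) (.inr (.inr (.inr ⟨e, j, j', he, rfl, rfl, hj⟩)))
  have : j = j' := eq_of_heq (Sigma.mk.inj_iff.mp (Sum.inr_injective h)).2
  omega

lemma adj_interior_snd (j : Fin (elen P t e - 1)) (he : active SA SB e)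
    (hj : j.val + 2 = elen P t e) :
    Adj 𝔾 (Sum.inr ⟨e, j⟩) (Sum.inl (ends e).2) :=
  adj_of_rel Sum.inr_ne_inl (.inr (.inr (.inl ⟨e, j, he, rfl, rfl, hj⟩)))

lemma adj_fst_snd (he : active SA SB e) (h1 : elen P t e = 1) (hne : (ends e).1 ≠ (ends e).2) :
    Adj 𝔾 (Sum.inl (ends e).1) (Sum.inl (ends e).2) :=
  adj_of_rel (fun h => hne (Sum.inl_injective h)) (.inl ⟨e, he, h1, rfl, rfl⟩)

lemma edist_fst_interior_le (j : Fin (elen P t e - 1)) (he : active SA SB e) :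
    edist 𝔾 (Sum.inl (ends e).1) (Sum.inr ⟨e, j⟩) ≤ (j.val + 1 : ℕ) := by
  obtain ⟨n, hn⟩ := j
  induction n with
  | zero => exact (adj_fst_interior ⟨0, hn⟩ he rfl).edist_le_one
  | succ n ih =>
    exact edist_le_add_of_le (ih (by omega))
      (adj_interior_succ ⟨n, by omega⟩ ⟨n + 1, hn⟩ he rfl).edist_le_one

lemma edist_interior_snd_le (j : Fin (elen P t e - 1)) (he : active SA SB e) :
    edist 𝔾 (Sum.inr ⟨e, j⟩) (Sum.inl (ends e).2) ≤ (elen P t e - 1 - j.val : ℕ) := by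
  obtain ⟨n, hn⟩ := j
  induction hm : elen P t e - 2 - n generalizing n with
  | zero =>
    exact (adj_interior_snd ⟨n, hn⟩ he (show n + 2 = _ by omega)).edist_le_one.trans
      (by norm_cast; omega)
  | succ m ih =>
    refine (edist_le_add_of_le (adj_interior_succ ⟨n, hn⟩ ⟨n + 1, by omega⟩ he rfl).edist_le_one
      (ih (n + 1) _ (by omega))).trans_eq ?_
    dsimp only
    norm_cast
    omega

lemma edist_fst_snd_le (he : active SA SB e) (h1 : 1 ≤ elen P t e)
    (hne : (ends e).1 ≠ (ends e).2) :
    edist 𝔾 (Sum.inl (ends e).1) (Sum.inl (ends e).2) ≤ elen P t e := by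
  by_cases h2 : 2 ≤ elen P t e
  · let j : Fin (elen P t e - 1) := ⟨0, by omega⟩
    refine (edist_le_add_of_le (edist_fst_interior_le j he) (edist_interior_snd_le j he)).trans_eq ?_
    norm_cast
    omega
  · exact (adj_fst_snd he (by omega) hne).edist_le_one.trans (by norm_cast)

lemma edist_interior_fst_le_elen (j : Fin (elen P t e - 1)) (he : active SA SB e) :
    edist 𝔾 (Sum.inr ⟨e, j⟩) (Sum.inl (ends e).1) ≤ elen P t e :=
  edist_comm.trans_le <| (edist_fst_interior_le j he).trans (by norm_cast; omega)

lemma edist_interior_snd_le_elen (j : Fin (elen P t e - 1)) (he : active SA SB e) :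
    edist 𝔾 (Sum.inr ⟨e, j⟩) (Sum.inl (ends e).2) ≤ elen P t e :=
  (edist_interior_snd_le j he).trans (by norm_cast; omega)

lemma edist_Lk_Lk1_le (hP : 1 ≤ P) : edist 𝔾 (Sum.inl .Lk) (Sum.inl .Lk1) ≤ P :=
  edist_fst_snd_le (e := .lklk1) trivial hP (by simp [ends])

lemma edist_Tl_Lk1_le (hP : 1 ≤ P) (h : Fin lk) : edist 𝔾 (Sum.inl (.Tl h)) (Sum.inl .Lk1) ≤ P :=
  edist_comm.trans_le (edist_fst_snd_le (e := .lk1t h) trivial hP (by simp [ends]))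

lemma edist_Fl_Lk1_le (hP : 1 ≤ P) (h : Fin lk) : edist 𝔾 (Sum.inl (.Fl h)) (Sum.inl .Lk1) ≤ P :=
  edist_comm.trans_le (edist_fst_snd_le (e := .lk1f h) trivial hP (by simp [ends]))

lemma edist_bit_Lk1_le (hP : 1 ≤ P) (i : Fin k) (h : Fin lk) :
    edist 𝔾 (Sum.inl (ends (.lenc i h)).2) (Sum.inl .Lk1) ≤ P := by
  show edist 𝔾 (Sum.inl (if _ then _ else _)) _ ≤ _
  split
  exacts [edist_Tl_Lk1_le hP h, edist_Fl_Lk1_le hP h]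

lemma edist_Lk1_le_of_leftCore (hP : 1 ≤ P) {x : Vtx k lk P t} (hx : leftCore x) :
    edist 𝔾 x (Sum.inl .Lk1) ≤ 2 * P := by
  rw [two_mul]
  match x, hx with
  | Sum.inl (.L i), _ =>
    exact edist_le_add_of_le (edist_fst_snd_le (e := .llk i) trivial hP (by simp [ends]))
      (edist_Lk_Lk1_le hP)
  | Sum.inl .Lk, _ => exact (edist_Lk_Lk1_le hP).trans le_self_add
  | Sum.inl .Lk1, _ => exact SimpleGraph.edist_self.trans_le bot_le
  | Sum.inl (.Tl h), _ => exact (edist_Tl_Lk1_le hP h).trans le_self_add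
  | Sum.inl (.Fl h), _ => exact (edist_Fl_Lk1_le hP h).trans le_self_add
  | Sum.inr ⟨.llk _, j⟩, _ =>
    exact edist_le_add_of_le (edist_interior_snd_le_elen j trivial) (edist_Lk_Lk1_le hP)
  | Sum.inr ⟨.lklk1, j⟩, _ => exact (edist_interior_snd_le_elen j trivial).trans le_self_add
  | Sum.inr ⟨.lk1t _, j⟩, _ => exact (edist_interior_fst_le_elen j trivial).trans le_self_add
  | Sum.inr ⟨.lk1f _, j⟩, _ => exact (edist_interior_fst_le_elen j trivial).trans le_self_add
  | Sum.inr ⟨.lenc i h, j⟩, _ =>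
    exact edist_le_add_of_le (edist_interior_snd_le_elen j trivial) (edist_bit_Lk1_le hP i h)

lemma edist_Rk_Rk1_le (hP : 1 ≤ P) : edist 𝔾 (Sum.inl .Rk) (Sum.inl .Rk1) ≤ P :=
  edist_fst_snd_le (e := .rkrk1) trivial hP (by simp [ends])

lemma edist_Tr_Rk1_le (hP : 1 ≤ P) (h : Fin lk) : edist 𝔾 (Sum.inl (.Tr h)) (Sum.inl .Rk1) ≤ P :=
  edist_comm.trans_le (edist_fst_snd_le (e := .rk1t h) trivial hP (by simp [ends]))

lemma edist_Fr_Rk1_le (hP : 1 ≤ P) (h : Fin lk) : edist 𝔾 (Sum.inl (.Fr h)) (Sum.inl .Rk1) ≤ P :=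
  edist_comm.trans_le (edist_fst_snd_le (e := .rk1f h) trivial hP (by simp [ends]))

lemma edist_bit_Rk1_le (hP : 1 ≤ P) (i : Fin k) (h : Fin lk) :
    edist 𝔾 (Sum.inl (ends (.renc i h)).2) (Sum.inl .Rk1) ≤ P := by
  show edist 𝔾 (Sum.inl (if _ then _ else _)) _ ≤ _
  split
  exacts [edist_Tr_Rk1_le hP h, edist_Fr_Rk1_le hP h]

lemma edist_Rk1_le_of_rightCore (hP : 1 ≤ P) {y : Vtx k lk P t} (hy : rightCore y) :
    edist 𝔾 y (Sum.inl .Rk1) ≤ 2 * P := by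
  rw [two_mul]
  match y, hy with
  | Sum.inl (.R i), _ =>
    exact edist_le_add_of_le (edist_fst_snd_le (e := .rrk i) trivial hP (by simp [ends]))
      (edist_Rk_Rk1_le hP)
  | Sum.inl .Rk, _ => exact (edist_Rk_Rk1_le hP).trans le_self_add
  | Sum.inl .Rk1, _ => exact SimpleGraph.edist_self.trans_le bot_le
  | Sum.inl (.Tr h), _ => exact (edist_Tr_Rk1_le hP h).trans le_self_add
  | Sum.inl (.Fr h), _ => exact (edist_Fr_Rk1_le hP h).trans le_self_add
  | Sum.inr ⟨.rrk _, j⟩, _ =>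
    exact edist_le_add_of_le (edist_interior_snd_le_elen j trivial) (edist_Rk_Rk1_le hP)
  | Sum.inr ⟨.rkrk1, j⟩, _ => exact (edist_interior_snd_le_elen j trivial).trans le_self_add
  | Sum.inr ⟨.rk1t _, j⟩, _ => exact (edist_interior_fst_le_elen j trivial).trans le_self_add
  | Sum.inr ⟨.rk1f _, j⟩, _ => exact (edist_interior_fst_le_elen j trivial).trans le_self_add
  | Sum.inr ⟨.renc i h, j⟩, _ =>
    exact edist_le_add_of_le (edist_interior_snd_le_elen j trivial) (edist_bit_Rk1_le hP i h)

lemma edist_Lk1_Rk1_le : edist 𝔾 (Sum.inl .Lk1) (Sum.inl .Rk1) ≤ (2 * t + 1 : ℕ) :=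
  edist_fst_snd_le (e := .crC) trivial (Nat.le_add_left 1 _) (by simp [ends])

end LB

theorem stmt10_general (k lk P t : ℕ) (hP : 1 ≤ P)
    (SA SB : Fin k → Bool) :
    (∀ x : LB.Vtx k lk P t, LB.leftCore x →
      (LB.graph k lk P t SA SB).dist x (Sum.inl LBBase.Lk1) ≤ 2 * P) ∧
    (∀ x y : LB.Vtx k lk P t, LB.leftCore x → LB.leftCore y →
      (LB.graph k lk P t SA SB).dist x y ≤ 4 * P) ∧
    (∀ x y : LB.Vtx k lk P t, LB.leftCore x → LB.rightCore y →
      (LB.graph k lk P t SA SB).dist x y ≤ 4 * P + 2 * t + 1) := by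
  have hL {x : LB.Vtx k lk P t} (hx : LB.leftCore x) :=
    LB.edist_Lk1_le_of_leftCore (SA := SA) (SB := SB) hP hx
  have hR {y : LB.Vtx k lk P t} (hy : LB.rightCore y) :=
    LB.edist_Rk1_le_of_rightCore (SA := SA) (SB := SB) hP hy
  refine ⟨fun x hx => ENat.toNat_le_of_le_natCast ?_,
    fun x y hx hy => ENat.toNat_le_of_le_natCast ?_,
    fun x y hx hy => ENat.toNat_le_of_le_natCast ?_⟩
  · exact_mod_cast hL hx
  · calc _ ≤ (2 * P : ℕ∞) + 2 * P :=
          SimpleGraph.edist_le_add_of_le (hL hx) (SimpleGraph.edist_comm.trans_le (hL hy))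
      _ = (4 * P : ℕ) := by push_cast; ring
  · calc _ ≤ (2 * P : ℕ∞) + (2 * t + 1 : ℕ) + 2 * P :=
          SimpleGraph.edist_le_add_of_le (SimpleGraph.edist_le_add_of_le (hL hx)
            LB.edist_Lk1_Rk1_le) (SimpleGraph.edist_comm.trans_le (hR hy))
      _ = (4 * P + 2 * t + 1 : ℕ) := by push_cast; ring

/-- In the lower-bound graph construction, every node in
`L ∪ T ∪ F` or on a `P`-path among the left-side nodes is at distance at most
`2P` from `ℓ_{k+1}`; consequently every two such left-side nodes are at
distance at most `4P` from each other, and every such left-side node is at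
distance at most `4P + 2t + 1` from every (core) right-side node. -/
theorem stmt10 (k lk P t : ℕ) (hk : k = 2 ^ lk) (hP : 1 ≤ P) (ht : 1 ≤ t)
    (SA SB : Fin k → Bool) :
    (∀ x : LB.Vtx k lk P t, LB.leftCore x →
      (LB.graph k lk P t SA SB).dist x (Sum.inl LBBase.Lk1) ≤ 2 * P) ∧
    (∀ x y : LB.Vtx k lk P t, LB.leftCore x → LB.leftCore y →
      (LB.graph k lk P t SA SB).dist x y ≤ 4 * P) ∧
    (∀ x y : LB.Vtx k lk P t, LB.leftCore x → LB.rightCore y →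
      (LB.graph k lk P t SA SB).dist x y ≤ 4 * P + 2 * t + 1) :=
  stmt10_general k lk P t hP SA SB
end

section
/- In the lower-bound graph with input edges, if S_A[i] = 1 and S_B[i] = 1 (so both edges (ℓ_i,ℓ_{k+1}) and (r_i,r_{k+1}) are absent), then the distance between ℓ'_i and r'_i is at least 6P + 2t + 1. -/
/-! A potential argument. Give each base node the length of the shortest route from `ℓ'_i`
found by the paper's casework (`P` to `ℓ_i`, `2P` to `ℓ_k` or to the encoding nodes of `i`,
`3P` to `ℓ_{k+1}`, then `2t+1` across, and symmetrically up to `6P+2t+1` at `r'_i`), and each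
interior node of a connecting path the smaller of the values propagated from its two ends.
Across every present path the values at the ends differ by at most its length; the only paths
that would violate this are the input edges at index `i`, which `S_A[i] = S_B[i] = 1` removes.
Hence the potential changes by at most one along each edge, so no walk from `ℓ'_i` (value `0`)
to `r'_i` is shorter than `6P+2t+1`. -/

namespace SimpleGraph

variable {V : Type*} {G : SimpleGraph V} {f : V → ℕ} {u v : V}

theorem Walk.le_add_length (hf : ∀ ⦃x y⦄, G.Adj x y → f y ≤ f x + 1) (w : G.Walk u v) :
    f v ≤ f u + w.length := by
  induction w with
  | nil => simp
  | cons hadj _ ih =>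
    have := hf hadj
    rw [Walk.length_cons]
    omega

theorem Reachable.le_add_dist (hf : ∀ ⦃x y⦄, G.Adj x y → f y ≤ f x + 1) (h : G.Reachable u v) :
    f v ≤ f u + G.dist u v := by
  obtain ⟨w, hw⟩ := h.exists_walk_length_eq_dist
  exact hw ▸ w.le_add_length hf

end SimpleGraph

namespace LB

variable {k lk P t : ℕ} {SA SB : Fin k → Bool}

theorem graph_adj_of_rel {x y : Vtx k lk P t} (hne : x ≠ y) (h : Rel k lk P t SA SB x y) :
    (graph k lk P t SA SB).Adj x y :=
  (SimpleGraph.fromRel_adj _ _ _).mpr ⟨hne, Or.inl h⟩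

theorem one_le_elen (hP : 1 ≤ P) (e : LBEdge k lk) : 1 ≤ elen P t e := by
  cases e <;> simp only [elen] <;> omega

theorem ends_fst_ne_snd (e : LBEdge k lk) : (ends e).1 ≠ (ends e).2 := by
  cases e <;> simp only [ends] <;> (try split_ifs) <;> simp

theorem reachable_interior {e : LBEdge k lk} (he : active SA SB e) :
    ∀ (j : ℕ) (hj : j < elen P t e - 1),
      (graph k lk P t SA SB).Reachable (Sum.inl (ends e).1) (Sum.inr ⟨e, ⟨j, hj⟩⟩)
  | 0, hj =>
    (graph_adj_of_rel Sum.inl_ne_inr <|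
      Or.inr <| Or.inl ⟨e, ⟨0, hj⟩, he, rfl, rfl, rfl⟩).reachable
  | j + 1, hj =>
    (reachable_interior he j (by omega)).trans <|
      (graph_adj_of_rel (fun h => by simp [Vtx, Fin.ext_iff] at h) <|
        Or.inr <| Or.inr <| Or.inr ⟨e, ⟨j, by omega⟩, ⟨j + 1, hj⟩, he, rfl, rfl, rfl⟩).reachable

theorem reachable_ends (hP : 1 ≤ P) {e : LBEdge k lk} (he : active SA SB e) :
    (graph k lk P t SA SB).Reachable (Sum.inl (ends e).1) (Sum.inl (ends e).2) := by
  rcases Nat.lt_or_ge (elen P t e) 2 with hlen | hlen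
  · have hone : elen P t e = 1 := by have := one_le_elen (t := t) hP e; omega
    exact (graph_adj_of_rel (fun h => ends_fst_ne_snd e (Sum.inl_injective h)) <|
      Or.inl ⟨e, he, hone, rfl, rfl⟩).reachable
  · exact (reachable_interior he (elen P t e - 2) (by omega)).trans <|
      (graph_adj_of_rel Sum.inr_ne_inl <|
        Or.inr <| Or.inr <| Or.inl ⟨e, ⟨elen P t e - 2, by omega⟩, he, rfl, rfl, by
          simp only; omega⟩).reachable

theorem reachable_L'_R' (hP : 1 ≤ P) (i : Fin k) :
    (graph k lk P t SA SB).Reachable (Sum.inl (.L' i)) (Sum.inl (.R' i)) := by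
  have path (e : LBEdge k lk) (he : active SA SB e) := reachable_ends (t := t) hP he
  exact (path (.ll' i) trivial).symm.trans <| (path (.llk i) trivial).trans <|
    (path .lklk1 trivial).trans <| (path .crC trivial).trans <|
    (path .rkrk1 trivial).symm.trans <| (path (.rrk i) trivial).symm.trans (path (.rr' i) trivial)

def basePotential (P t : ℕ) (i : Fin k) : LBBase k lk → ℕ
  | .L' j => if j = i then 0 else 4 * P
  | .L j => if j = i then P else 3 * P
  | .Lk => 2 * P
  | .Lk1 => 3 * P
  | .Tl h => if Nat.testBit i.val h.val then 2 * P else 4 * P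
  | .Fl h => if Nat.testBit i.val h.val then 4 * P else 2 * P
  | .Rk1 => 3 * P + 2 * t + 1
  | .Rk => 4 * P + 2 * t + 1
  | .Tr h => if Nat.testBit i.val h.val then 4 * P + 2 * t + 1 else 2 * P + 2 * t + 1
  | .Fr h => if Nat.testBit i.val h.val then 2 * P + 2 * t + 1 else 4 * P + 2 * t + 1
  | .R j => if j = i then 5 * P + 2 * t + 1 else 3 * P + 2 * t + 1
  | .R' j => if j = i then 6 * P + 2 * t + 1 else 4 * P + 2 * t + 1

def potential (P t : ℕ) (i : Fin k) : Vtx k lk P t → ℕ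
  | .inl b => basePotential P t i b
  | .inr ⟨e, j⟩ =>
    min (basePotential P t i (ends e).1 + j.val + 1)
      (basePotential P t i (ends e).2 + (elen P t e - 1 - j.val))

theorem basePotential_ends_le {i : Fin k} (hA : SA i = true) (hB : SB i = true)
    {e : LBEdge k lk} (he : active SA SB e) :
    basePotential P t i (ends e).1 ≤ basePotential P t i (ends e).2 + elen P t e ∧
      basePotential P t i (ends e).2 ≤ basePotential P t i (ends e).1 + elen P t e := by
  cases e <;> simp only [active] at he <;> simp only [ends, elen] <;> (try split_ifs) <;>
    simp only [basePotential] <;> (try split_ifs) <;> first | omega | simp_all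

theorem potential_le_of_rel {i : Fin k} (hA : SA i = true) (hB : SB i = true)
    {x y : Vtx k lk P t} (h : Rel k lk P t SA SB x y) :
    potential P t i y ≤ potential P t i x + 1 ∧ potential P t i x ≤ potential P t i y + 1 := by
  obtain ⟨e, he, hone, rfl, rfl⟩ | ⟨e, j, he, rfl, rfl, hj⟩ | ⟨e, j, he, rfl, rfl, hj⟩ |
      ⟨e, j, j', -, rfl, rfl, hj⟩ := h
  · have := basePotential_ends_le (P := P) (t := t) hA hB he
    simp only [potential]; omega
  · have := basePotential_ends_le (P := P) (t := t) hA hB he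
    have := j.isLt
    simp only [potential]; omega
  · have := basePotential_ends_le (P := P) (t := t) hA hB he
    have := j.isLt
    simp only [potential]; omega
  · have := j'.isLt
    simp only [potential]; omega

theorem potential_le_of_adj {i : Fin k} (hA : SA i = true) (hB : SB i = true)
    ⦃x y : Vtx k lk P t⦄ (h : (graph k lk P t SA SB).Adj x y) :
    potential P t i y ≤ potential P t i x + 1 := by
  obtain ⟨-, hxy | hyx⟩ := (SimpleGraph.fromRel_adj _ _ _).mp h
  · exact (potential_le_of_rel hA hB hxy).1
  · exact (potential_le_of_rel hA hB hyx).2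

end LB

theorem stmt12_general (k lk P t : ℕ) (hP : 1 ≤ P)
    (SA SB : Fin k → Bool) (i : Fin k) (hA : SA i = true) (hB : SB i = true) :
    6 * P + 2 * t + 1 ≤
      (LB.graph k lk P t SA SB).dist
        (Sum.inl (LBBase.L' i)) (Sum.inl (LBBase.R' i)) := by
  have h := (LB.reachable_L'_R' (lk := lk) (t := t) (SA := SA) (SB := SB) hP i).le_add_dist
    (f := LB.potential P t i) (LB.potential_le_of_adj hA hB)
  simpa [LB.potential, LB.basePotential] using h

/-- In the lower-bound graph with input edges, if
`S_A[i] = 1` and `S_B[i] = 1` (so both edges `(ℓ_i, ℓ_{k+1})` and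
`(r_i, r_{k+1})` are absent), then the distance between `ℓ'_i` and `r'_i`
is at least `6P + 2t + 1`. -/
theorem stmt12 (k lk P t : ℕ) (hk : k = 2 ^ lk) (hP : 1 ≤ P) (ht : 1 ≤ t)
    (SA SB : Fin k → Bool) (i : Fin k) (hA : SA i = true) (hB : SB i = true) :
    6 * P + 2 * t + 1 ≤
      (LB.graph k lk P t SA SB).dist
        (Sum.inl (LBBase.L' i)) (Sum.inl (LBBase.R' i)) :=
  stmt12_general k lk P t hP SA SB i hA hB
end
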